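/- Every GCGWE with homogeneous resources on an undirected graph has a pure Nash equilibrium reachable from any initial state by a finite sequence of better response updates; moreover the number of better response updates in any such sequence starting from state X^0 is bounded by the number of distinct values the total congestion function C takes on the (finite) state space. -/

import Mathlib

open Finset

variable {N : ℕ} {R : Type} [Fintype R] [DecidableEq R]

/-- Congestion level of player `n` in state `Z`. -/
def cong (S : Fin N → Fin N → ℝ) (Z : Fin N → R) (n : Fin N) : ℝ :=
  ∑ m ∈ univ.filter (fun m => Z m = Z n), S m n

/-- Total congestion of a state. -/
def totalCong (S : Fin N → Fin N → ℝ) (Z : Fin N → R) : ℝ :=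
  ∑ n, cong S Z n

/-- A better response update from `X` to `Y` (homogeneous resources). -/
def BR (S : Fin N → Fin N → ℝ) (Rn : Fin N → Finset R)
    (f : Fin N → ℝ → ℝ) (X Y : Fin N → R) : Prop :=
  ∃ n, ∃ r ∈ Rn n, Y = Function.update X n r ∧
    f n (cong S Y n) > f n (cong S X n)

/-- A pure Nash equilibrium: no better response update is possible. -/
def IsNash (S : Fin N → Fin N → ℝ) (Rn : Fin N → Finset R)
    (f : Fin N → ℝ → ℝ) (X : Fin N → R) : Prop :=
  ∀ n, ∀ r ∈ Rn n,
    ¬ f n (cong S (Function.update X n r) n) > f n (cong S X n)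

lemma cong_eq_ite (S : Fin N → Fin N → ℝ) (Z : Fin N → R) (n : Fin N) :
    cong S Z n = ∑ m, if Z m = Z n then S m n else 0 := by
  rw [cong, sum_filter]

lemma totalCong_split (S : Fin N → Fin N → ℝ) (hSdiag : ∀ n, S n n = 0)
    (hSsymm : ∀ m n, S m n = S n m) (Z : Fin N → R) (n : Fin N) :
    totalCong S Z = 2 * cong S Z n +
      ∑ k ∈ univ.erase n, ∑ m ∈ univ.erase n, if Z m = Z k then S m k else 0 := by
  have hcn : cong S Z n = ∑ k, if Z n = Z k then S n k else 0 := by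
    rw [cong_eq_ite]
    refine Finset.sum_congr rfl fun m _ => ?_
    by_cases h : Z m = Z n
    · rw [if_pos h, if_pos h.symm, hSsymm]
    · rw [if_neg h, if_neg (fun hh : Z n = Z m => h hh.symm)]
  have h1 : totalCong S Z = cong S Z n + ∑ k ∈ univ.erase n, cong S Z k := by
    rw [totalCong, ← Finset.add_sum_erase _ _ (mem_univ n)]
  have h2 : ∀ k, cong S Z k =
      (if Z n = Z k then S n k else 0) +
        ∑ m ∈ univ.erase n, if Z m = Z k then S m k else 0 := by
    intro k
    rw [cong_eq_ite, ← Finset.add_sum_erase _ _ (mem_univ n)]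
  have h3 : ∑ k ∈ univ.erase n, (if Z n = Z k then S n k else 0) = cong S Z n := by
    rw [hcn, ← Finset.add_sum_erase _ (fun k => if Z n = Z k then S n k else 0) (mem_univ n)]
    simp [hSdiag n]
  calc totalCong S Z
      = cong S Z n + ∑ k ∈ univ.erase n,
          ((if Z n = Z k then S n k else 0) +
            ∑ m ∈ univ.erase n, if Z m = Z k then S m k else 0) := by
        rw [h1]; exact congrArg _ (Finset.sum_congr rfl fun k _ => h2 k)
    _ = cong S Z n + (cong S Z n +
          ∑ k ∈ univ.erase n, ∑ m ∈ univ.erase n, if Z m = Z k then S m k else 0) := by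
        rw [Finset.sum_add_distrib, h3]
    _ = _ := by ring

lemma BR_totalCong_lt (S : Fin N → Fin N → ℝ) (hSdiag : ∀ n, S n n = 0)
    (hSsymm : ∀ m n, S m n = S n m) (Rn : Fin N → Finset R)
    (f : Fin N → ℝ → ℝ) (hf : ∀ n, StrictAnti (f n))
    (X Y : Fin N → R) (h : BR S Rn f X Y) :
    totalCong S Y < totalCong S X := by
  obtain ⟨n, r, hr, hY, hgt⟩ := h
  have hcong : cong S Y n < cong S X n := (hf n).lt_iff_gt.mp hgt
  have hT : (∑ k ∈ univ.erase n, ∑ m ∈ univ.erase n, if Y m = Y k then S m k else 0)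
      = ∑ k ∈ univ.erase n, ∑ m ∈ univ.erase n, if X m = X k then S m k else 0 := by
    refine Finset.sum_congr rfl fun k hk => Finset.sum_congr rfl fun m hm => ?_
    rw [hY, Function.update_of_ne (Finset.ne_of_mem_erase hm),
      Function.update_of_ne (Finset.ne_of_mem_erase hk)]
  rw [totalCong_split S hSdiag hSsymm Y n, totalCong_split S hSdiag hSsymm X n, hT]
  linarith

lemma BR_feasible (S : Fin N → Fin N → ℝ) (Rn : Fin N → Finset R)
    (f : Fin N → ℝ → ℝ) (X Y : Fin N → R) (h : BR S Rn f X Y)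
    (hX : ∀ n, X n ∈ Rn n) : ∀ n, Y n ∈ Rn n := by
  obtain ⟨n, r, hr, hY, -⟩ := h
  intro m
  rcases eq_or_ne m n with rfl | hmn
  · rw [hY, Function.update_self]; exact hr
  · rw [hY, Function.update_of_ne hmn]; exact hX m

/-- Every GCGWE with homogeneous resources on an undirected graph has a pure
Nash equilibrium reachable from any initial state by a finite sequence of
better response updates; moreover the number of updates in any such sequence is
bounded by the number of distinct values that the total congestion function
takes on the (finite) state space. -/
theorem stmt17 (N : ℕ) (R : Type) [Fintype R] [DecidableEq R]
    (S : Fin N → Fin N → ℝ)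
    (hSnonneg : ∀ m n, 0 ≤ S m n) (hSdiag : ∀ n, S n n = 0)
    (hSsymm : ∀ m n, S m n = S n m)
    (Rn : Fin N → Finset R) (hRn : ∀ n, (Rn n).Nonempty)
    (f : Fin N → ℝ → ℝ) (hf : ∀ n, StrictAnti (f n))
    (X0 : Fin N → R) (hX0 : ∀ n, X0 n ∈ Rn n) :
    (∃ (k : ℕ) (seq : ℕ → (Fin N → R)),
        seq 0 = X0 ∧
        (∀ t < k, BR S Rn f (seq t) (seq (t + 1))) ∧
        IsNash S Rn f (seq k)) ∧
      ∀ (k : ℕ) (seq : ℕ → (Fin N → R)),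
        seq 0 = X0 → (∀ t < k, BR S Rn f (seq t) (seq (t + 1))) →
        k ≤ (((univ : Finset (Fin N → R)).filter
              (fun X => ∀ n, X n ∈ Rn n)).image (totalCong S)).card := by
  classical
  set Vals : Finset ℝ :=
    ((univ : Finset (Fin N → R)).filter (fun X => ∀ n, X n ∈ Rn n)).image (totalCong S)
    with hVals
  -- measure
  set μ : (Fin N → R) → ℕ := fun X => (Vals.filter (fun v => v < totalCong S X)).card
    with hμ
  have hmem : ∀ X : Fin N → R, (∀ n, X n ∈ Rn n) → totalCong S X ∈ Vals := by
    intro X hX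
    exact Finset.mem_image.mpr ⟨X, Finset.mem_filter.mpr ⟨mem_univ X, hX⟩, rfl⟩
  have hμlt : ∀ X Y : Fin N → R, (∀ n, X n ∈ Rn n) → BR S Rn f X Y → μ Y < μ X := by
    intro X Y hX hBR
    have hlt := BR_totalCong_lt S hSdiag hSsymm Rn f hf X Y hBR
    have hYfeas := BR_feasible S Rn f X Y hBR hX
    apply Finset.card_lt_card
    constructor
    · intro v hv
      rw [Finset.mem_filter] at hv ⊢
      exact ⟨hv.1, lt_trans hv.2 hlt⟩
    · intro hsub
      have h1 : totalCong S Y ∈ Vals.filter (fun v => v < totalCong S X) :=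
        Finset.mem_filter.mpr ⟨hmem Y hYfeas, hlt⟩
      have h2 := hsub h1
      rw [Finset.mem_filter] at h2
      exact lt_irrefl _ h2.2
  -- existence of Nash reachable
  have reach : ∀ mu : ℕ, ∀ X : Fin N → R, (∀ n, X n ∈ Rn n) → μ X ≤ mu →
      ∃ (k : ℕ) (seq : ℕ → (Fin N → R)), seq 0 = X ∧
        (∀ t < k, BR S Rn f (seq t) (seq (t + 1))) ∧ IsNash S Rn f (seq k) := by
    intro mu
    induction mu with
    | zero =>
        intro X hX hle
        by_cases hN : IsNash S Rn f X
        · exact ⟨0, fun _ => X, rfl, fun t ht => absurd ht (Nat.not_lt_zero t), hN⟩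
        · exfalso
          rw [IsNash] at hN
          push_neg at hN
          obtain ⟨n, r, hr, hgt⟩ := hN
          have hBR : BR S Rn f X (Function.update X n r) := ⟨n, r, hr, rfl, hgt⟩
          have := hμlt X _ hX hBR
          omega
    | succ m ih =>
        intro X hX hle
        by_cases hN : IsNash S Rn f X
        · exact ⟨0, fun _ => X, rfl, fun t ht => absurd ht (Nat.not_lt_zero t), hN⟩
        · rw [IsNash] at hN
          push_neg at hN
          obtain ⟨n, r, hr, hgt⟩ := hN
          set Y := Function.update X n r with hYdef
          have hBR : BR S Rn f X Y := ⟨n, r, hr, rfl, hgt⟩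
          have hYfeas := BR_feasible S Rn f X Y hBR hX
          have hμY : μ Y ≤ m := by have := hμlt X Y hX hBR; omega
          obtain ⟨k, seq', h0, hBR', hNash⟩ := ih Y hYfeas hμY
          refine ⟨k + 1, fun t => Nat.casesOn t X seq', rfl, ?_, hNash⟩
          intro t ht
          cases t with
          | zero => simpa [h0] using hBR
          | succ s => exact hBR' s (by omega)
  refine ⟨reach (μ X0) X0 hX0 le_rfl, ?_⟩
  -- the bound
  intro k seq h0 hsteps
  have feas : ∀ t ≤ k, ∀ n, seq t n ∈ Rn n := by
    intro t
    induction t with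
    | zero => intro _; rw [h0]; exact hX0
    | succ s ih =>
        intro hs
        exact BR_feasible S Rn f (seq s) (seq (s + 1)) (hsteps s (by omega))
          (ih (by omega))
  have mono : ∀ t ≤ k, ∀ s < t, totalCong S (seq t) < totalCong S (seq s) := by
    intro t
    induction t with
    | zero => intro _ s hs; omega
    | succ u ih =>
        intro hu s hs
        have hstep := BR_totalCong_lt S hSdiag hSsymm Rn f hf _ _ (hsteps u (by omega))
        rcases Nat.lt_succ_iff_lt_or_eq.mp hs with h | rfl
        · exact lt_trans hstep (ih (by omega) s h)
        · exact hstep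
  have hinj : Set.InjOn (fun t => totalCong S (seq t)) ↑(Finset.range (k + 1)) := by
    intro a ha b hb hab
    simp only [Finset.coe_range, Set.mem_Iio] at ha hb
    by_contra hne
    rcases Nat.lt_or_ge a b with h | h
    · exact absurd hab (ne_of_gt (mono b (by omega) a h))
    · have : b < a := by omega
      exact absurd hab (ne_of_lt (mono a (by omega) b this))
  have hmaps : ∀ t ∈ Finset.range (k + 1), totalCong S (seq t) ∈ Vals := by
    intro t ht
    rw [Finset.mem_range] at ht
    exact hmem _ (feas t (by omega))
  have hcard := Finset.card_le_card_of_injOn (fun t => totalCong S (seq t)) hmaps hinj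
  rw [Finset.card_range] at hcard
  omega
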